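/- For every list a of length L ≥ 1 of positive integers, the height of the canonical decoded forest decode(a) equals the maximum entry of a. In particular, if all entries of a lie in {1,…,M} then decode(a) has height at most M. -/

import Mathlib

/-! A tree decoded at level `l` from `s` reaches exactly level `max (listMax s) l`. The induction
step rests on one invariant of splitting: cutting `s` at the entries equal to `v` leaves
`max (·) v` of the maximal entry unchanged, since only the entries equal to `v` disappear. -/

/-- A rooted plane tree: a node carrying a finite ordered list of child subtrees.
A node with no children is a leaf. -/
inductive PTree : Type where
  | node : List PTree → PTree

namespace PTree

mutual
/-- Number of leaves of a plane tree. -/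
def leaves : PTree → ℕ
  | .node [] => 1
  | .node (c :: cs) => c.leaves + leavesList cs

/-- Total number of leaves of a list of plane trees. -/
def leavesList : List PTree → ℕ
  | [] => 0
  | c :: cs => c.leaves + leavesList cs
end

mutual
/-- Height of a plane tree (a single leaf has height 1). -/
def height : PTree → ℕ
  | .node [] => 1
  | .node (c :: cs) => 1 + max c.height (heightList cs)

/-- Maximum height among a list of plane trees (0 for the empty list). -/
def heightList : List PTree → ℕ
  | [] => 0
  | c :: cs => max c.height (heightList cs)
end

mutual
/-- Separation levels between consecutive leaves inside a tree whose root is at level `l`: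
between two consecutive leaves lying in distinct children we record `l+1`
(one more than the level of their lowest common ancestor, which is the root). -/
def enc : PTree → ℕ → List ℕ
  | .node [], _ => []
  | .node (c :: cs), l => c.enc (l + 1) ++ encList cs (l + 1)

/-- Separation levels for a list of sibling subtrees all at level `l`, including
the separator `l` between consecutive subtrees. -/
def encList : List PTree → ℕ → List ℕ
  | [], _ => []
  | c :: cs, l => (l :: c.enc l) ++ encList cs l
end

end PTree

/-- Total number of leaves of a plane forest. -/
def forestLeaves (F : List PTree) : ℕ := PTree.leavesList F

/-- Height of a plane forest: the maximum level of any of its nodes (roots are at level 1). -/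
def forestHeight (F : List PTree) : ℕ := PTree.heightList F

/-- The separation array of a plane forest: for each pair of consecutive leaves
(numbered left to right), the level at which they separate (`1` if they lie in
different trees, and `1 +` the level of their lowest common ancestor otherwise). -/
def forestSep : List PTree → List ℕ
  | [] => []
  | t :: ts => t.enc 1 ++ PTree.encList ts 1

/-- Maximum entry of a list of naturals (`0` for the empty list). -/
def listMax (a : List ℕ) : ℕ := a.foldr max 0

/-- Split a list at the positions of entries equal to `v`, producing the list of the
(possibly empty) segments delimited by those entries; a list containing `k` occurrences
of `v` yields `k + 1` segments, in left-to-right order. -/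
def splitSep (v : ℕ) : List ℕ → List (List ℕ)
  | [] => [[]]
  | x :: xs =>
    match splitSep v xs with
    | [] => [[]]
    | r :: rs => if x = v then [] :: r :: rs else (x :: r) :: rs

theorem splitSep_ne_nil (v : ℕ) (s : List ℕ) : splitSep v s ≠ [] := by
  cases s with
  | nil => simp [splitSep]
  | cons x xs =>
    simp only [splitSep]
    cases h : splitSep v xs with
    | nil => simp
    | cons r rs => by_cases hxv : x = v <;> simp [hxv]

theorem listMax_le_of_mem_splitSep {v : ℕ} {s s' : List ℕ} (h : s' ∈ splitSep v s) :
    listMax s' ≤ listMax s := by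
  induction s generalizing s' with
  | nil =>
    simp only [splitSep, List.mem_singleton] at h
    subst h; exact le_rfl
  | cons x xs ih =>
    simp only [splitSep] at h
    cases hs : splitSep v xs with
    | nil => exact absurd hs (splitSep_ne_nil v xs)
    | cons r rs =>
      rw [hs] at h
      have hr : r ∈ splitSep v xs := by rw [hs]; exact List.mem_cons_self
      by_cases hxv : x = v
      · simp only [if_pos hxv, List.mem_cons] at h
        rcases h with h | h | h
        · subst h; simp [listMax]
        · subst h
          exact le_trans (ih hr) (by simp [listMax, le_max_iff, le_refl, or_true])
        · have : s' ∈ splitSep v xs := by rw [hs]; exact List.mem_cons_of_mem _ h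
          exact le_trans (ih this) (by simp [listMax, le_max_iff, le_refl, or_true])
      · simp only [if_neg hxv, List.mem_cons] at h
        rcases h with h | h
        · subst h
          have := ih hr
          simp only [listMax, List.foldr] at *
          omega
        · have : s' ∈ splitSep v xs := by rw [hs]; exact List.mem_cons_of_mem _ h
          have := ih this
          simp only [listMax, List.foldr] at *
          omega

/-- The canonical decoding `T(s, l)` of a list `s` (all of whose entries are intended to
be strictly greater than `l`) into a plane tree rooted at level `l`: the empty list
decodes to a single leaf, and otherwise the children are obtained by decoding, at level
`l + 1`, the segments of `s` delimited by the entries equal to `l + 1`. -/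
def decodeT (s : List ℕ) (l : ℕ) : PTree :=
  if h : s = [] ∨ listMax s ≤ l then .node []
  else .node ((splitSep (l + 1) s).attach.map (fun x => decodeT x.1 (l + 1)))
termination_by listMax s + 1 - l
decreasing_by
  have h1 : listMax x.1 ≤ listMax s := listMax_le_of_mem_splitSep x.2
  push_neg at h
  omega

/-- The canonical decoded forest of a list `a`: decode, as trees rooted at level `1`,
the segments of `a` delimited by the entries equal to `1`. -/
def decode (a : List ℕ) : List PTree := (splitSep 1 a).map (fun s => decodeT s 1)

lemma listMax_nil : listMax [] = 0 := rfl

lemma listMax_cons (x : ℕ) (xs : List ℕ) : listMax (x :: xs) = max x (listMax xs) := rfl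

lemma listMax_le_iff {a : List ℕ} {M : ℕ} : listMax a ≤ M ↔ ∀ x ∈ a, x ≤ M := by
  induction a with
  | nil => simp [listMax]
  | cons x xs ih => simp [listMax_cons, ih]

lemma le_listMax_of_mem {a : List ℕ} {x : ℕ} (hx : x ∈ a) : x ≤ listMax a :=
  listMax_le_iff.mp le_rfl x hx

lemma max_listMax_map_listMax_splitSep (v : ℕ) (s : List ℕ) :
    max (listMax ((splitSep v s).map listMax)) v = max (listMax s) v := by
  induction s with
  | nil => simp [splitSep, listMax]
  | cons x xs ih =>
    simp only [splitSep]
    cases hs : splitSep v xs with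
    | nil => exact absurd hs (splitSep_ne_nil v xs)
    | cons r rs =>
      rw [hs] at ih
      by_cases hxv : x = v
      · simp only [hxv, if_true, List.map_cons, listMax_cons, listMax_nil] at ih ⊢
        omega
      · simp only [hxv, if_false, List.map_cons, listMax_cons] at ih ⊢
        omega

namespace PTree

lemma height_node_of_ne_nil {L : List PTree} (h : L ≠ []) :
    (node L).height = 1 + heightList L := by
  cases L with
  | nil => exact absurd rfl h
  | cons c cs => rw [height, heightList]

lemma heightList_map_add_eq {α : Type*} {f : α → PTree} {g : α → ℕ} {l : ℕ} {L : List α}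
    (hL : L ≠ []) (h : ∀ x ∈ L, (f x).height + l = max (g x) l + 1) :
    heightList (L.map f) + l = max (listMax (L.map g)) l + 1 := by
  induction L with
  | nil => exact absurd rfl hL
  | cons x xs ih =>
    have hx := h x List.mem_cons_self
    cases xs with
    | nil => simp only [List.map, heightList, listMax_cons, listMax_nil]; omega
    | cons y ys =>
      have ih := ih (List.cons_ne_nil _ _) fun z hz => h z (List.mem_cons_of_mem _ hz)
      simp only [List.map_cons, heightList, listMax_cons] at ih ⊢
      omega

end PTree

lemma height_decodeT_add (s : List ℕ) (l : ℕ) :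
    (decodeT s l).height + l = max (listMax s) l + 1 := by
  induction s, l using decodeT.induct with
  | case1 s l hleaf =>
    have hs : listMax s ≤ l := by
      rcases hleaf with rfl | h
      · exact Nat.zero_le l
      · exact h
    rw [decodeT, dif_pos hleaf, PTree.height]
    omega
  | case2 s l hnode ih =>
    have hl : l < listMax s := not_le.mp (not_or.mp hnode).2
    have hchildren : ((splitSep (l + 1) s).attach.map fun t => decodeT t.1 (l + 1)) =
        (splitSep (l + 1) s).map (decodeT · (l + 1)) := by
      simp only [List.map_subtype, List.unattach_attach]
    have hheights := PTree.heightList_map_add_eq (splitSep_ne_nil (l + 1) s)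
      (f := (decodeT · (l + 1))) (g := listMax) fun t ht => ih ⟨t, ht⟩
    rw [max_listMax_map_listMax_splitSep] at hheights
    have hne : (splitSep (l + 1) s).map (decodeT · (l + 1)) ≠ [] := by
      simpa using splitSep_ne_nil (l + 1) s
    rw [decodeT, dif_neg hnode, hchildren, PTree.height_node_of_ne_nil hne]
    omega

/-- For every list `a` of length `L ≥ 1` of positive integers, the
height of the canonical decoded forest `decode a` equals the maximum entry of `a`.
In particular, if all entries of `a` lie in `{1,…,M}` then `decode a` has height at
most `M`. -/
theorem decode_height_eq_listMax (a : List ℕ) (hlen : 1 ≤ a.length)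
    (hpos : ∀ x ∈ a, 1 ≤ x) :
    forestHeight (decode a) = listMax a ∧
    ∀ M : ℕ, (∀ x ∈ a, x ≤ M) → forestHeight (decode a) ≤ M := by
  have hheight : forestHeight (decode a) + 1 = max (listMax a) 1 + 1 := by
    rw [← max_listMax_map_listMax_splitSep]
    exact PTree.heightList_map_add_eq (splitSep_ne_nil 1 a) fun t _ => height_decodeT_add t 1
  obtain ⟨x, hx⟩ := List.exists_mem_of_length_pos hlen
  have hmax : 1 ≤ listMax a := (hpos x hx).trans (le_listMax_of_mem hx)
  have heq : forestHeight (decode a) = listMax a := by omega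
  exact ⟨heq, fun M hM => heq ▸ listMax_le_iff.mpr hM⟩
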